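/- Let 𝒴 ⊂ ℝ be a finite set, let 𝒜, 𝒢₁, 𝒢₂, ℬ₂ be finite types, let p be a strictly positive probability mass function on 𝒴 × 𝒜 × 𝒢₁ × 𝒢₂ × ℬ₂, and fix a ∈ 𝒜. If Y ⊥ B₂ | (A, G₁, G₂) under p, then for all (y, a′, g₁, g₂): ∑_{b₂} p(b₂ | Y=y, A=a′, G₁=g₁, G₂=g₂) · ψ_a^{G₁,(G₂,B₂)}(y,a′,g₁,g₂,b₂) = ψ_a^{G₁,G₂}(y,a′,g₁,g₂); that is, the conditional expectation of the influence function for the adjustment set (G₁,(G₂,B₂)) given (Y,A,G₁,G₂) equals the influence function for the adjustment set (G₁,G₂). -/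

import Mathlib

open Finset

noncomputable section

variable {Y : Finset ℝ} {A G₁ G₂ B₂ : Type}
variable [Fintype A] [Fintype G₁] [Fintype G₂] [Fintype B₂] [DecidableEq A]

/-- Marginal `p(g₁)`. -/
def pG1 (p : Y × A × G₁ × G₂ × B₂ → ℝ) (g₁ : G₁) : ℝ :=
  ∑ y : Y, ∑ a : A, ∑ g₂ : G₂, ∑ b₂ : B₂, p (y, a, g₁, g₂, b₂)

/-- Marginal `p(g₂)`. -/
def pG2 (p : Y × A × G₁ × G₂ × B₂ → ℝ) (g₂ : G₂) : ℝ :=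
  ∑ y : Y, ∑ a : A, ∑ g₁ : G₁, ∑ b₂ : B₂, p (y, a, g₁, g₂, b₂)

/-- Marginal `p(b₂)`. -/
def pB2 (p : Y × A × G₁ × G₂ × B₂ → ℝ) (b₂ : B₂) : ℝ :=
  ∑ y : Y, ∑ a : A, ∑ g₁ : G₁, ∑ g₂ : G₂, p (y, a, g₁, g₂, b₂)

/-- Marginal `p(g₂, b₂)`. -/
def pG2B2 (p : Y × A × G₁ × G₂ × B₂ → ℝ) (g₂ : G₂) (b₂ : B₂) : ℝ :=
  ∑ y : Y, ∑ a : A, ∑ g₁ : G₁, p (y, a, g₁, g₂, b₂)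

/-- Marginal `p(a, g₁, b₂)`. -/
def pAG1B2 (p : Y × A × G₁ × G₂ × B₂ → ℝ) (a : A) (g₁ : G₁) (b₂ : B₂) : ℝ :=
  ∑ y : Y, ∑ g₂ : G₂, p (y, a, g₁, g₂, b₂)

/-- Marginal `p(a, g₁, g₂, b₂)`. -/
def pAG1G2B2 (p : Y × A × G₁ × G₂ × B₂ → ℝ) (a : A) (g₁ : G₁) (g₂ : G₂) (b₂ : B₂) : ℝ :=
  ∑ y : Y, p (y, a, g₁, g₂, b₂)

/-- Marginal `p(a, g₁, g₂)`. -/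
def pAG1G2 (p : Y × A × G₁ × G₂ × B₂ → ℝ) (a : A) (g₁ : G₁) (g₂ : G₂) : ℝ :=
  ∑ y : Y, ∑ b₂ : B₂, p (y, a, g₁, g₂, b₂)

/-- Outcome regression `m₁(g₁,b₂) = ∑_y y·p(y | a, g₁, b₂)` for the
adjustment set `(G₁, B₂)`. -/
def m1 (p : Y × A × G₁ × G₂ × B₂ → ℝ) (a : A) (g₁ : G₁) (b₂ : B₂) : ℝ :=
  ∑ y : Y, (y : ℝ) * ((∑ g₂ : G₂, p (y, a, g₁, g₂, b₂)) / pAG1B2 p a g₁ b₂)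

/-- Outcome regression `m₂(g₁,g₂,b₂) = ∑_y y·p(y | a, g₁, g₂, b₂)` for the
adjustment set `(G₁, (G₂, B₂))`. -/
def m2 (p : Y × A × G₁ × G₂ × B₂ → ℝ) (a : A) (g₁ : G₁) (g₂ : G₂) (b₂ : B₂) : ℝ :=
  ∑ y : Y, (y : ℝ) * (p (y, a, g₁, g₂, b₂) / pAG1G2B2 p a g₁ g₂ b₂)

/-- Outcome regression `m₃(g₁,g₂) = ∑_y y·p(y | a, g₁, g₂)` for the
adjustment set `(G₁, G₂)`. -/
def m3 (p : Y × A × G₁ × G₂ × B₂ → ℝ) (a : A) (g₁ : G₁) (g₂ : G₂) : ℝ :=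
  ∑ y : Y, (y : ℝ) * ((∑ b₂ : B₂, p (y, a, g₁, g₂, b₂)) / pAG1G2 p a g₁ g₂)

/-- Target parameter for the adjustment set `(G₁, B₂)`. -/
def T1 (p : Y × A × G₁ × G₂ × B₂ → ℝ) (a : A) : ℝ :=
  ∑ g₁ : G₁, pG1 p g₁ * ∑ b₂ : B₂, pB2 p b₂ * m1 p a g₁ b₂

/-- Target parameter for the adjustment set `(G₁, (G₂, B₂))`. -/
def T2 (p : Y × A × G₁ × G₂ × B₂ → ℝ) (a : A) : ℝ :=
  ∑ g₁ : G₁, pG1 p g₁ * ∑ g₂ : G₂, ∑ b₂ : B₂, pG2B2 p g₂ b₂ * m2 p a g₁ g₂ b₂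

/-- Target parameter for the adjustment set `(G₁, G₂)`. -/
def T3 (p : Y × A × G₁ × G₂ × B₂ → ℝ) (a : A) : ℝ :=
  ∑ g₁ : G₁, pG1 p g₁ * ∑ g₂ : G₂, pG2 p g₂ * m3 p a g₁ g₂

/-- Influence function `ψ_a^{G₁,B₂}` for the adjustment set `(G₁, B₂)`. -/
def psi1 (p : Y × A × G₁ × G₂ × B₂ → ℝ) (a : A)
    (y : Y) (a' : A) (g₁ : G₁) (b₂ : B₂) : ℝ :=
  (if a' = a then (1 : ℝ) else 0) * (pG1 p g₁ * pB2 p b₂ / pAG1B2 p a g₁ b₂) *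
      ((y : ℝ) - m1 p a g₁ b₂)
    + (∑ b₂' : B₂, pB2 p b₂' * m1 p a g₁ b₂')
    + (∑ g₁' : G₁, pG1 p g₁' * m1 p a g₁' b₂)
    - 2 * T1 p a

/-- Influence function `ψ_a^{G₁,(G₂,B₂)}` for the adjustment set `(G₁, (G₂, B₂))`. -/
def psi2 (p : Y × A × G₁ × G₂ × B₂ → ℝ) (a : A)
    (y : Y) (a' : A) (g₁ : G₁) (g₂ : G₂) (b₂ : B₂) : ℝ :=
  (if a' = a then (1 : ℝ) else 0) *
      (pG1 p g₁ * pG2B2 p g₂ b₂ / pAG1G2B2 p a g₁ g₂ b₂) *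
      ((y : ℝ) - m2 p a g₁ g₂ b₂)
    + (∑ g₂' : G₂, ∑ b₂' : B₂, pG2B2 p g₂' b₂' * m2 p a g₁ g₂' b₂')
    + (∑ g₁' : G₁, pG1 p g₁' * m2 p a g₁' g₂ b₂)
    - 2 * T2 p a

/-- Influence function `ψ_a^{G₁,G₂}` for the adjustment set `(G₁, G₂)`. -/
def psi3 (p : Y × A × G₁ × G₂ × B₂ → ℝ) (a : A)
    (y : Y) (a' : A) (g₁ : G₁) (g₂ : G₂) : ℝ :=
  (if a' = a then (1 : ℝ) else 0) * (pG1 p g₁ * pG2 p g₂ / pAG1G2 p a g₁ g₂) *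
      ((y : ℝ) - m3 p a g₁ g₂)
    + (∑ g₂' : G₂, pG2 p g₂' * m3 p a g₁ g₂')
    + (∑ g₁' : G₁, pG1 p g₁' * m3 p a g₁' g₂)
    - 2 * T3 p a

/-- Conditional independence `G₂ ⊥ (A, G₁) | B₂` under `p`. -/
def CI_G2_AG1_B2 (p : Y × A × G₁ × G₂ × B₂ → ℝ) : Prop :=
  ∀ (g₂ : G₂) (a : A) (g₁ : G₁) (b₂ : B₂),
    (∑ y : Y, p (y, a, g₁, g₂, b₂)) / pB2 p b₂ =
      (pG2B2 p g₂ b₂ / pB2 p b₂) * (pAG1B2 p a g₁ b₂ / pB2 p b₂)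

/-- Conditional independence `Y ⊥ B₂ | (A, G₁, G₂)` under `p`. -/
def CI_Y_B2_AG1G2 (p : Y × A × G₁ × G₂ × B₂ → ℝ) : Prop :=
  ∀ (y : Y) (a : A) (g₁ : G₁) (g₂ : G₂) (b₂ : B₂),
    p (y, a, g₁, g₂, b₂) / pAG1G2 p a g₁ g₂ =
      ((∑ b₂' : B₂, p (y, a, g₁, g₂, b₂')) / pAG1G2 p a g₁ g₂) *
        (pAG1G2B2 p a g₁ g₂ b₂ / pAG1G2 p a g₁ g₂)

/-- Variance of a real function of the observation under `p`. -/
def VarP (p : Y × A × G₁ × G₂ × B₂ → ℝ) (f : Y × A × G₁ × G₂ × B₂ → ℝ) : ℝ :=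
  (∑ o : Y × A × G₁ × G₂ × B₂, p o * f o ^ 2) -
    (∑ o : Y × A × G₁ × G₂ × B₂, p o * f o) ^ 2

/-! Under `Y ⊥ B₂ | (A, G₁, G₂)` the regression `m(g₁, g₂, b₂)` does not depend on `b₂`, and
`p(b₂ | y, a, g₁, g₂) = p(b₂ | a, g₁, g₂)`. The first fact makes `T` and the two augmentation
terms of `ψ^{G₁,(G₂,B₂)}` equal to those of `ψ^{G₁,G₂}`; the second one turns the average over
`b₂` of the weight `p(g₁) p(g₂, b₂) / p(a, g₁, g₂, b₂)` into `p(g₁) p(g₂) / p(a, g₁, g₂)`. -/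

section

omit [Fintype A] [Fintype G₁] [Fintype G₂] [DecidableEq A]

variable {p : Y × A × G₁ × G₂ × B₂ → ℝ}

omit [Fintype B₂] in
theorem pAG1G2B2_pos (hpos : ∀ o, 0 < p o) [Nonempty Y] (a : A) (g₁ : G₁) (g₂ : G₂) (b₂ : B₂) :
    0 < pAG1G2B2 p a g₁ g₂ b₂ :=
  sum_pos (fun _ _ => hpos _) univ_nonempty

theorem pAG1G2_pos (hpos : ∀ o, 0 < p o) [Nonempty Y] [Nonempty B₂] (a : A) (g₁ : G₁)
    (g₂ : G₂) : 0 < pAG1G2 p a g₁ g₂ :=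
  sum_pos (fun _ _ => sum_pos (fun _ _ => hpos _) univ_nonempty) univ_nonempty

theorem CI_Y_B2_AG1G2.mul_pAG1G2_eq (hpos : ∀ o, 0 < p o) (hCI : CI_Y_B2_AG1G2 p)
    (y : Y) (a : A) (g₁ : G₁) (g₂ : G₂) (b₂ : B₂) :
    p (y, a, g₁, g₂, b₂) * pAG1G2 p a g₁ g₂ =
      (∑ b₂' : B₂, p (y, a, g₁, g₂, b₂')) * pAG1G2B2 p a g₁ g₂ b₂ := by
  have : Nonempty Y := ⟨y⟩
  have : Nonempty B₂ := ⟨b₂⟩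
  have h := hCI y a g₁ g₂ b₂
  have hne := (pAG1G2_pos hpos a g₁ g₂).ne'
  field_simp at h
  exact h

theorem CI_Y_B2_AG1G2.m2_eq_m3 (hpos : ∀ o, 0 < p o) (hCI : CI_Y_B2_AG1G2 p)
    (a : A) (g₁ : G₁) (g₂ : G₂) (b₂ : B₂) : m2 p a g₁ g₂ b₂ = m3 p a g₁ g₂ := by
  refine sum_congr rfl fun y _ => congrArg _ ?_
  have : Nonempty Y := ⟨y⟩
  have : Nonempty B₂ := ⟨b₂⟩
  rw [div_eq_div_iff (pAG1G2B2_pos hpos a g₁ g₂ b₂).ne' (pAG1G2_pos hpos a g₁ g₂).ne',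
    hCI.mul_pAG1G2_eq hpos]

theorem CI_Y_B2_AG1G2.condB2_eq (hpos : ∀ o, 0 < p o) (hCI : CI_Y_B2_AG1G2 p)
    (y : Y) (a : A) (g₁ : G₁) (g₂ : G₂) (b₂ : B₂) :
    p (y, a, g₁, g₂, b₂) / ∑ b₂' : B₂, p (y, a, g₁, g₂, b₂') =
      pAG1G2B2 p a g₁ g₂ b₂ / pAG1G2 p a g₁ g₂ := by
  have : Nonempty Y := ⟨y⟩
  have : Nonempty B₂ := ⟨b₂⟩
  rw [div_eq_div_iff (sum_pos (fun _ _ => hpos _) univ_nonempty).ne'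
    (pAG1G2_pos hpos a g₁ g₂).ne', hCI.mul_pAG1G2_eq hpos, mul_comm]

end

section

omit [DecidableEq A]

omit [Fintype G₂] in
theorem sum_pG2B2 (p : Y × A × G₁ × G₂ × B₂ → ℝ) (g₂ : G₂) :
    ∑ b₂ : B₂, pG2B2 p g₂ b₂ = pG2 p g₂ := by
  unfold pG2B2 pG2
  rw [sum_comm]
  refine sum_congr rfl fun _ _ => ?_
  rw [sum_comm]
  exact sum_congr rfl fun _ _ => sum_comm

theorem sum_sum_pG2B2_mul (p : Y × A × G₁ × G₂ × B₂ → ℝ) (f : G₂ → ℝ) :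
    ∑ g₂ : G₂, ∑ b₂ : B₂, pG2B2 p g₂ b₂ * f g₂ = ∑ g₂ : G₂, pG2 p g₂ * f g₂ := by
  simp only [← sum_mul, sum_pG2B2]

variable {p : Y × A × G₁ × G₂ × B₂ → ℝ}

theorem CI_Y_B2_AG1G2.T2_eq_T3 (hpos : ∀ o, 0 < p o) (hCI : CI_Y_B2_AG1G2 p) (a : A) :
    T2 p a = T3 p a := by
  simp only [T2, T3, hCI.m2_eq_m3 hpos, sum_sum_pG2B2_mul]

theorem CI_Y_B2_AG1G2.sum_condB2_mul_weight (hpos : ∀ o, 0 < p o) (hCI : CI_Y_B2_AG1G2 p)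
    (y : Y) (a : A) (g₁ : G₁) (g₂ : G₂) :
    ∑ b₂ : B₂, p (y, a, g₁, g₂, b₂) / (∑ b₂' : B₂, p (y, a, g₁, g₂, b₂')) *
        (pG1 p g₁ * pG2B2 p g₂ b₂ / pAG1G2B2 p a g₁ g₂ b₂) =
      pG1 p g₁ * pG2 p g₂ / pAG1G2 p a g₁ g₂ := by
  have : Nonempty Y := ⟨y⟩
  have hterm : ∀ b₂, pAG1G2B2 p a g₁ g₂ b₂ / pAG1G2 p a g₁ g₂ *
      (pG1 p g₁ * pG2B2 p g₂ b₂ / pAG1G2B2 p a g₁ g₂ b₂) =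
        pG1 p g₁ / pAG1G2 p a g₁ g₂ * pG2B2 p g₂ b₂ := fun b₂ => by
    have := (pAG1G2B2_pos hpos a g₁ g₂ b₂).ne'
    field_simp
  simp only [hCI.condB2_eq hpos, hterm, ← mul_sum, sum_pG2B2]
  ring

end

/-- Projection identity in the proof of Lemma 4.2 (deletion of
overadjustment backdoor variables): under `Y ⊥ B₂ | (A, G₁, G₂)`, the
conditional expectation of `ψ_a^{G₁,(G₂,B₂)}` given `(Y, A, G₁, G₂)`
equals `ψ_a^{G₁,G₂}`. -/
theorem psi_projection
    (p : Y × A × G₁ × G₂ × B₂ → ℝ)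
    (hpos : ∀ o, 0 < p o) (hsum : ∑ o, p o = 1) (a : A)
    (hCI : CI_Y_B2_AG1G2 p) :
    ∀ (y : Y) (a' : A) (g₁ : G₁) (g₂ : G₂),
      ∑ b₂ : B₂,
        (p (y, a', g₁, g₂, b₂) / (∑ b₂' : B₂, p (y, a', g₁, g₂, b₂'))) *
          psi2 p a y a' g₁ g₂ b₂ =
        psi3 p a y a' g₁ g₂ := by
  intro y a' g₁ g₂
  obtain ⟨o, -⟩ := nonempty_of_sum_ne_zero (hsum ▸ one_ne_zero)
  have : Nonempty B₂ := ⟨o.2.2.2.2⟩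
  have hq : ∑ b₂ : B₂, p (y, a', g₁, g₂, b₂) / (∑ b₂' : B₂, p (y, a', g₁, g₂, b₂')) = 1 := by
    rw [← sum_div, div_self (sum_pos (fun _ _ => hpos _) univ_nonempty).ne']
  have hweighted : ∑ b₂ : B₂, p (y, a', g₁, g₂, b₂) / (∑ b₂' : B₂, p (y, a', g₁, g₂, b₂')) *
      ((if a' = a then (1 : ℝ) else 0) * (pG1 p g₁ * pG2B2 p g₂ b₂ / pAG1G2B2 p a g₁ g₂ b₂) *
        ((y : ℝ) - m3 p a g₁ g₂)) =
      (if a' = a then (1 : ℝ) else 0) * (pG1 p g₁ * pG2 p g₂ / pAG1G2 p a g₁ g₂) *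
        ((y : ℝ) - m3 p a g₁ g₂) := by
    split_ifs with h
    · subst h
      simp only [one_mul, ← mul_assoc, ← sum_mul, hCI.sum_condB2_mul_weight hpos]
    · simp
  have hpsi2 : ∀ b₂, psi2 p a y a' g₁ g₂ b₂ =
      (if a' = a then (1 : ℝ) else 0) * (pG1 p g₁ * pG2B2 p g₂ b₂ / pAG1G2B2 p a g₁ g₂ b₂) *
          ((y : ℝ) - m3 p a g₁ g₂) +
        (psi3 p a y a' g₁ g₂ - (if a' = a then (1 : ℝ) else 0) *
          (pG1 p g₁ * pG2 p g₂ / pAG1G2 p a g₁ g₂) * ((y : ℝ) - m3 p a g₁ g₂)) := fun b₂ => by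
    simp only [psi2, psi3, hCI.m2_eq_m3 hpos, hCI.T2_eq_T3 hpos, sum_sum_pG2B2_mul]
    ring
  simp only [hpsi2, mul_add, sum_add_distrib, ← sum_mul, hq, hweighted, one_mul]
  ring
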